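/- Let U, V be unitary operators on H_s ⊗ H_e (finite-dimensional). Then the partial trace over H_e satisfies Tr_e(U ρ U†) = Tr_e(V ρ V†) for all density matrices ρ on H_s ⊗ H_e if and only if U = (1_s ⊗ Φ) V for some unitary Φ on H_e. -/

import Mathlib

open Matrix Kronecker
open scoped ComplexOrder

/-- Hilbert–Schmidt (Frobenius) norm of a complex square matrix. -/
noncomputable def hsNorm {k : Type*} [Fintype k] (M : Matrix k k ℂ) : ℝ :=
  Real.sqrt (Matrix.trace (Mᴴ * M)).re

/-- Trace norm: trace of the positive-semidefinite square root of `Mᴴ * M`. -/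
noncomputable def traceNorm {k : Type*} [Fintype k] [DecidableEq k] (M : Matrix k k ℂ) : ℝ :=
  (Matrix.trace
    (((Matrix.PosSemidef.isHermitian (Matrix.posSemidef_conjTranspose_mul_self M)).eigenvectorUnitary : Matrix k k ℂ) *
      Matrix.diagonal ((RCLike.ofReal : ℝ → ℂ) ∘ Real.sqrt ∘
        (Matrix.PosSemidef.isHermitian (Matrix.posSemidef_conjTranspose_mul_self M)).eigenvalues) *
      (star (Matrix.PosSemidef.isHermitian (Matrix.posSemidef_conjTranspose_mul_self M)).eigenvectorUnitary :
        Matrix k k ℂ))).re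

/-- Induced two-norm: the largest singular value of `M`. -/
noncomputable def twoNorm {k : Type*} [Fintype k] [DecidableEq k] (M : Matrix k k ℂ) : ℝ :=
  ⨆ i, Real.sqrt
    ((Matrix.PosSemidef.isHermitian
      (Matrix.posSemidef_conjTranspose_mul_self M)).eigenvalues i)

/-- Partial trace over the environment factor `e`. -/
noncomputable def ptraceE {s e : Type*} [Fintype s] [Fintype e]
    (M : Matrix (s × e) (s × e) ℂ) : Matrix s s ℂ :=
  Matrix.of fun i j => ∑ ν : e, M (i, ν) (j, ν)

/-- Partial trace over the system factor `s`. -/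
noncomputable def ptraceS {s e : Type*} [Fintype s] [Fintype e]
    (M : Matrix (s × e) (s × e) ℂ) : Matrix e e ℂ :=
  Matrix.of fun μ ν => ∑ i : s, M (i, μ) (i, ν)

/-- A density matrix: positive semidefinite with unit trace. -/
def IsDensity {k : Type*} [Fintype k] (ρ : Matrix k k ℂ) : Prop :=
  ρ.PosSemidef ∧ Matrix.trace ρ = 1

/-! Writing `Eᵢⱼ = single i j 1 ⊗ₖ 1`, the `(j, i)` entry of `Tr_e M` is `trace (Eᵢⱼ * M)`, so the
hypothesis says `trace (U† Eᵢⱼ U ρ) = trace (V† Eᵢⱼ V ρ)` for every density matrix `ρ`. Testing on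
pure states and polarizing gives `U† Eᵢⱼ U = V† Eᵢⱼ V`, so `W = U V†` commutes with every `Eᵢⱼ`.
The commutant of `M_s ⊗ 1` is `1 ⊗ M_e`, hence `W = 1 ⊗ Φ`, and `Φ` is unitary because `W` is.
Conversely, `(1 ⊗ Φ)† Eᵢⱼ (1 ⊗ Φ) = Eᵢⱼ` for unitary `Φ`. -/

namespace Matrix

theorem eq_of_forall_star_dotProduct_mulVec_self {k : Type*} [Fintype k] [DecidableEq k]
    {X Y : Matrix k k ℂ} (h : ∀ x : k → ℂ, star x ⬝ᵥ X *ᵥ x = star x ⬝ᵥ Y *ᵥ x) : X = Y := by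
  refine (toLpLin 2 2 : Matrix k k ℂ ≃ₗ[ℂ] _).injective
    ((ext_inner_map (V := EuclideanSpace ℂ k) _ _).mp fun x => ?_)
  simp only [EuclideanSpace.inner_eq_star_dotProduct, ofLp_toLpLin, toLin'_apply]
  rw [dotProduct_comm, dotProduct_comm _ (star (Y *ᵥ _)), star_dotProduct (v := X *ᵥ _),
    star_dotProduct (v := Y *ᵥ _), h]

theorem trace_mul_vecMulVec_star {k R : Type*} [Fintype k] [CommSemiring R] [StarRing R]
    (X : Matrix k k R) (x : k → R) :
    trace (X * vecMulVec x (star x)) = star x ⬝ᵥ X *ᵥ x := by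
  rw [mul_vecMulVec, trace_vecMulVec, dotProduct_comm]

theorem eq_of_forall_isDensity_trace_mul {k : Type*} [Fintype k] [DecidableEq k]
    {X Y : Matrix k k ℂ} (h : ∀ ρ, IsDensity ρ → trace (X * ρ) = trace (Y * ρ)) : X = Y := by
  refine eq_of_forall_star_dotProduct_mulVec_self fun x => ?_
  rcases eq_or_ne x 0 with rfl | hx
  · simp
  have hnorm : star x ⬝ᵥ x ≠ 0 := dotProduct_star_self_eq_zero.not.mpr hx
  have hρ : IsDensity ((star x ⬝ᵥ x)⁻¹ • vecMulVec x (star x)) := by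
    refine ⟨(posSemidef_vecMulVec_self_star x).smul
      (inv_nonneg.mpr (dotProduct_star_self_nonneg x)), ?_⟩
    rw [trace_smul, trace_vecMulVec, dotProduct_comm x, smul_eq_mul, inv_mul_cancel₀ hnorm]
  have := h _ hρ
  rwa [mul_smul_comm, mul_smul_comm, trace_smul, trace_smul, trace_mul_vecMulVec_star,
    trace_mul_vecMulVec_star, smul_right_inj (inv_ne_zero hnorm)] at this

variable {s e R : Type*} [Fintype s] [Fintype e] [DecidableEq s] [DecidableEq e]

theorem one_kronecker_conjTranspose_mul_kronecker_one_mul [CommSemiring R] [StarRing R]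
    (A : Matrix s s R) (Φ : Matrix e e R) :
    ((1 : Matrix s s R) ⊗ₖ Φ)ᴴ * (A ⊗ₖ (1 : Matrix e e R)) * (1 ⊗ₖ Φ) = A ⊗ₖ (Φᴴ * Φ) := by
  rw [conjTranspose_kronecker, conjTranspose_one, ← mul_kronecker_mul, ← mul_kronecker_mul,
    one_mul, mul_one, mul_one]

theorem eq_one_kronecker_of_forall_commute [Semiring R] {W : Matrix (s × e) (s × e) R}
    (hW : ∀ i j, Commute (single i j 1 ⊗ₖ (1 : Matrix e e R)) W) (i₀ : s) :
    W = 1 ⊗ₖ W.submatrix (Prod.mk i₀) (Prod.mk i₀) := by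
  ext ⟨a, α⟩ ⟨b, β⟩
  -- this entry of `E_{b i₀} W = W E_{b i₀}` reads `[a = b] W (i₀, α) (i₀, β) = W (a, α) (b, β)`
  have := congrFun (congrFun (hW b i₀).eq (a, α)) (i₀, β)
  simp only [mul_apply, Fintype.sum_prod_type, kroneckerMap_apply, single_apply, one_apply,
    ite_and] at this
  simp_all [kroneckerMap_apply, one_apply, eq_comm]

theorem mem_unitaryGroup_of_one_kronecker_mem [CommRing R] [StarRing R] [Nonempty s]
    {Φ : Matrix e e R} (h : (1 : Matrix s s R) ⊗ₖ Φ ∈ unitaryGroup (s × e) R) :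
    Φ ∈ unitaryGroup e R := by
  obtain ⟨i₀⟩ := ‹Nonempty s›
  have h1 : (1 : Matrix s s R) ⊗ₖ (Φᴴ * Φ) = 1 ⊗ₖ 1 := by
    rw [← one_kronecker_conjTranspose_mul_kronecker_one_mul, one_kronecker_one, mul_one]
    exact mem_unitaryGroup_iff'.mp h
  rw [mem_unitaryGroup_iff', star_eq_conjTranspose]
  ext α β
  simpa [kroneckerMap_apply] using congr_fun₂ h1 (i₀, α) (i₀, β)

theorem one_kronecker_mul_conj_single_kronecker_one [CommRing R] [StarRing R]
    {Φ : Matrix e e R} (hΦ : Φ ∈ unitaryGroup e R) (V : Matrix (s × e) (s × e) R) (i j : s) :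
    ((1 ⊗ₖ Φ) * V)ᴴ * (single i j 1 ⊗ₖ (1 : Matrix e e R)) * ((1 ⊗ₖ Φ) * V) =
      Vᴴ * (single i j 1 ⊗ₖ (1 : Matrix e e R)) * V := by
  have hΦΦ : Φᴴ * Φ = 1 := Unitary.star_mul_self_of_mem hΦ
  calc ((1 ⊗ₖ Φ) * V)ᴴ * (single i j 1 ⊗ₖ 1) * ((1 ⊗ₖ Φ) * V)
      = Vᴴ * ((1 ⊗ₖ Φ)ᴴ * (single i j 1 ⊗ₖ 1) * (1 ⊗ₖ Φ)) * V := by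
        simp only [conjTranspose_mul, mul_assoc]
    _ = Vᴴ * (single i j 1 ⊗ₖ 1) * V := by
        rw [one_kronecker_conjTranspose_mul_kronecker_one_mul, hΦΦ]

theorem exists_unitary_eq_one_kronecker_mul [CommRing R] [StarRing R]
    {U V : Matrix (s × e) (s × e) R} (hU : U ∈ unitaryGroup (s × e) R)
    (hV : V ∈ unitaryGroup (s × e) R)
    (h : ∀ i j, Uᴴ * (single i j 1 ⊗ₖ (1 : Matrix e e R)) * U =
      Vᴴ * (single i j 1 ⊗ₖ (1 : Matrix e e R)) * V) :
    ∃ Φ ∈ unitaryGroup e R, U = (1 ⊗ₖ Φ) * V := by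
  have hUU : U * Uᴴ = 1 := Unitary.mul_star_self_of_mem hU
  have hVV : V * Vᴴ = 1 := Unitary.mul_star_self_of_mem hV
  have hVV' : Vᴴ * V = 1 := Unitary.star_mul_self_of_mem hV
  set W := U * Vᴴ
  have hW : W ∈ unitaryGroup (s × e) R := mul_mem hU (Unitary.star_mem hV)
  have hUW : U = W * V := by rw [mul_assoc, hVV', mul_one]
  have hcomm : ∀ i j, Commute (single i j 1 ⊗ₖ (1 : Matrix e e R)) W := fun i j =>
    calc (single i j 1 ⊗ₖ 1) * W
        = U * (Uᴴ * (single i j 1 ⊗ₖ 1) * U) * Vᴴ := by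
          simp only [W, ← mul_assoc, hUU, one_mul]
      _ = U * (Vᴴ * (single i j 1 ⊗ₖ 1) * V) * Vᴴ := by rw [h]
      _ = W * (single i j 1 ⊗ₖ 1) := by
          simp only [W, mul_assoc, hVV, mul_one]
  cases isEmpty_or_nonempty s with
  | inl _ => exact ⟨1, one_mem _, Subsingleton.elim _ _⟩
  | inr hs =>
    have hWΦ := eq_one_kronecker_of_forall_commute hcomm hs.some
    exact ⟨_, mem_unitaryGroup_of_one_kronecker_mem (hWΦ ▸ hW), hWΦ ▸ hUW⟩

end Matrix

section PartialTrace

variable {s e : Type*} [Fintype s] [Fintype e] [DecidableEq s] [DecidableEq e]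

theorem ptraceE_apply_eq_trace (M : Matrix (s × e) (s × e) ℂ) (i j : s) :
    ptraceE M i j = trace ((single j i 1 ⊗ₖ (1 : Matrix e e ℂ)) * M) := by
  simp [ptraceE, trace, mul_apply, Fintype.sum_prod_type, kroneckerMap_apply, single_apply,
    one_apply, ite_and]

theorem ptraceE_conj_apply (W M : Matrix (s × e) (s × e) ℂ) (i j : s) :
    ptraceE (W * M * Wᴴ) i j = trace (Wᴴ * (single j i 1 ⊗ₖ (1 : Matrix e e ℂ)) * W * M) := by
  rw [ptraceE_apply_eq_trace, ← mul_assoc, ← mul_assoc, trace_mul_comm]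
  simp only [mul_assoc]

theorem forall_isDensity_ptraceE_conj_eq_iff (U V : Matrix (s × e) (s × e) ℂ) :
    (∀ ρ, IsDensity ρ → ptraceE (U * ρ * Uᴴ) = ptraceE (V * ρ * Vᴴ)) ↔
      ∀ i j, Uᴴ * (single i j 1 ⊗ₖ (1 : Matrix e e ℂ)) * U =
        Vᴴ * (single i j 1 ⊗ₖ (1 : Matrix e e ℂ)) * V := by
  refine ⟨fun h i j => eq_of_forall_isDensity_trace_mul fun ρ hρ => ?_, fun h ρ _ => ?_⟩
  · rw [← ptraceE_conj_apply, ← ptraceE_conj_apply, h ρ hρ]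
  · ext i j
    rw [ptraceE_conj_apply, ptraceE_conj_apply, h]

end PartialTrace

/-- `Tr_e(UρU†) = Tr_e(VρV†)` for all density matrices `ρ` iff
`U = (1_s ⊗ Φ) V` for some unitary `Φ` on the environment. -/
theorem stmt0 {s e : Type*} [Fintype s] [Fintype e] [DecidableEq s] [DecidableEq e]
    (U V : Matrix (s × e) (s × e) ℂ)
    (hU : U ∈ Matrix.unitaryGroup (s × e) ℂ) (hV : V ∈ Matrix.unitaryGroup (s × e) ℂ) :
    (∀ ρ : Matrix (s × e) (s × e) ℂ, IsDensity ρ →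
        ptraceE (U * ρ * Uᴴ) = ptraceE (V * ρ * Vᴴ)) ↔
      ∃ Φ ∈ Matrix.unitaryGroup e ℂ, U = ((1 : Matrix s s ℂ) ⊗ₖ Φ) * V := by
  rw [forall_isDensity_ptraceE_conj_eq_iff]
  refine ⟨exists_unitary_eq_one_kronecker_mul hU hV, ?_⟩
  rintro ⟨Φ, hΦ, rfl⟩ i j
  exact one_kronecker_mul_conj_single_kronecker_one hΦ V i j
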